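/- Suppose the set {x ∈ ℝ^n : |Φx| = b} is nonempty and let s := min{‖x‖₀ : |Φx| = b} with s ≥ 1. Let r₀ > 0 be such that every minimizer of ‖x‖₀ over {x : |Φx| = b} satisfies ‖x‖_∞ ≤ r₀ and, for every p ∈ (0,1), every minimizer of ‖x‖_p^p over {x : |Φx| = b} satisfies ‖x‖_∞ ≤ r₀. Let r_m > 0 satisfy r_m ≤ r₀ and: for every ε ∈ {−1,1}^m, every extreme point (x̃, ỹ) of T_ε, and every index k, if ỹ_k ≠ 0 then ỹ_k ≥ r_m. Define p* := 1 if r₀/r_m ≤ (s+1)/s, and p* := (ln(s+1) − ln s)/(ln r₀ − ln r_m) if r₀/r_m > (s+1)/s. Then p* ∈ (0,1] and for every fixed p ∈ (0, p*), every minimizer of ‖x‖_p^p over {x ∈ ℝ^n : |Φx| = b} is also a minimizer of ‖x‖₀ over {x ∈ ℝ^n : |Φx| = b}. -/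

import Mathlib

/-!
A minimizer `xₚ` of `‖·‖_p^p` is, after fixing the signs `ε` of `Φxₚ`, the `x`-part of a
minimizer of the strictly concave function `(x, y) ↦ ∑ yᵢ^p` over `T_ε`, hence `(xₚ, |xₚ|)` is
an extreme point of `T_ε` and every nonzero `|xₚᵢ|` is at least `r_m`. Comparing with a sparsest
solution `x₀` (coordinates at most `r₀`) gives `‖xₚ‖₀ r_m^p ≤ ‖xₚ‖_p^p ≤ ‖x₀‖_p^p ≤ s r₀^p`,
and `p < p*` is exactly `s r₀^p < (s + 1) r_m^p`, so `‖xₚ‖₀ ≤ s`.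
-/

open Matrix

/-- The set of sign vectors `{−1,1}^m`. -/
def signs (m : ℕ) : Set (Fin m → ℝ) := {ε | ∀ j, ε j = 1 ∨ ε j = -1}

/-- `T_ε = {(x,y) | Φx = b∘ε, |x| ≤ y, ‖x‖_∞ ≤ r₀, 0 ≤ y ≤ r₀·1}`. -/
def Teps {m n : ℕ} (Φ : Matrix (Fin m) (Fin n) ℝ) (b : Fin m → ℝ) (r₀ : ℝ)
    (ε : Fin m → ℝ) : Set ((Fin n → ℝ) × (Fin n → ℝ)) :=
  {q | Φ.mulVec q.1 = (fun j => b j * ε j) ∧ (∀ i, |q.1 i| ≤ q.2 i) ∧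
    ‖q.1‖ ≤ r₀ ∧ ∀ i, 0 ≤ q.2 i ∧ q.2 i ≤ r₀}

/-- `T = ⋃_{ε ∈ {−1,1}^m} T_ε`. -/
def TT {m n : ℕ} (Φ : Matrix (Fin m) (Fin n) ℝ) (b : Fin m → ℝ) (r₀ : ℝ) :
    Set ((Fin n → ℝ) × (Fin n → ℝ)) :=
  ⋃ ε ∈ signs m, Teps Φ b r₀ ε

/-- `‖x‖₀`: the number of nonzero components of `x`. -/
noncomputable def norm0 {n : ℕ} (x : Fin n → ℝ) : ℕ :=
  (Finset.univ.filter (fun i => x i ≠ 0)).card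

open Set

section ExtremePoints

variable {E F : Type*} [AddCommGroup E] [Module ℝ E] [AddCommGroup F] [Module ℝ F]
  {A : Set E} {x : E}

theorem StrictConcaveOn.mem_extremePoints_of_isMinOn {s : Set E} {f : E → ℝ}
    (hf : StrictConcaveOn ℝ s f) (hAs : A ⊆ s) (hx : x ∈ A) (hmin : IsMinOn f A x) :
    x ∈ A.extremePoints ℝ := by
  refine ⟨hx, fun x₁ hx₁ x₂ hx₂ ⟨a, b, ha, hb, hab, hxab⟩ => ?_⟩
  by_contra hne
  have hx₁₂ : x₁ ≠ x₂ := by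
    rintro rfl
    rw [← add_smul, hab, one_smul] at hxab
    exact hne hxab
  have hlt := hf.2 (hAs hx₁) (hAs hx₂) hx₁₂ ha hb hab
  rw [hxab, smul_eq_mul, smul_eq_mul] at hlt
  have h₁ := mul_le_mul_of_nonneg_left (hmin hx₁) ha.le
  have h₂ := mul_le_mul_of_nonneg_left (hmin hx₂) hb.le
  have hfx : a * f x + b * f x = f x := by rw [← add_mul, hab, one_mul]
  linarith

theorem mem_extremePoints_of_map_of_fiber (π : E →ₗ[ℝ] F)
    (hπx : π x ∈ (π '' A).extremePoints ℝ) (hx : x ∈ (A ∩ π ⁻¹' {π x}).extremePoints ℝ) :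
    x ∈ A.extremePoints ℝ := by
  refine ⟨hx.1.1, fun x₁ hx₁ x₂ hx₂ hseg => ?_⟩
  have himage : π x ∈ openSegment ℝ (π x₁) (π x₂) := by
    have := mem_image_of_mem π.toAffineMap hseg
    rwa [image_openSegment] at this
  obtain ⟨h₁, h₂⟩ := (mem_extremePoints.1 hπx).2 _ (mem_image_of_mem _ hx₁) _
    (mem_image_of_mem _ hx₂) himage
  exact hx.2 ⟨hx₁, h₁⟩ ⟨hx₂, h₂⟩ hseg

end ExtremePoints

theorem strictConcaveOn_sum_apply {ι : Type*} [Fintype ι] {s : Set ℝ} {f : ℝ → ℝ}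
    (hf : StrictConcaveOn ℝ s f) :
    StrictConcaveOn ℝ (univ.pi fun _ => s) (fun y : ι → ℝ => ∑ i, f (y i)) := by
  refine ⟨convex_pi fun _ _ => hf.1, fun u hu v hv huv a b ha hb hab => ?_⟩
  obtain ⟨i₀, hi₀⟩ := Function.ne_iff.mp huv
  simp only [Pi.add_apply, Pi.smul_apply, smul_eq_mul, Finset.mul_sum,
    ← Finset.sum_add_distrib]
  refine Finset.sum_lt_sum (fun i _ => ?_) ⟨i₀, Finset.mem_univ _, ?_⟩
  · simpa only [smul_eq_mul] using hf.concaveOn.2 (hu i trivial) (hv i trivial) ha.le hb.le hab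
  · simpa only [smul_eq_mul] using hf.2 (hu i₀ trivial) (hv i₀ trivial) hi₀ ha hb hab

theorem abs_mem_extremePoints_pi_Icc {ι : Type*} (x : ι → ℝ) :
    x ∈ (univ.pi fun i => Icc (-|x i|) |x i|).extremePoints ℝ := by
  simp only [extremePoints_pi, mem_univ_pi]
  intro i
  rw [extremePoints_Icc (neg_le_self (abs_nonneg _))]
  rcases abs_choice (x i) with h | h
  · exact Or.inr h.symm
  · exact Or.inl (by rw [h, neg_neg])


section CritExponent

/-- The exponent `p*` of the theorem for the ratio `κ = (s+1)/s` and `R = r₀/r_m`. -/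
noncomputable def critExponent (κ R : ℝ) : ℝ :=
  if R ≤ κ then 1 else Real.log κ / Real.log R

variable {κ R : ℝ}

theorem critExponent_pos (hκ : 1 < κ) : 0 < critExponent κ R := by
  unfold critExponent
  split_ifs with h
  · exact one_pos
  · exact div_pos (Real.log_pos hκ) (Real.log_pos (hκ.trans (not_le.1 h)))

theorem critExponent_le_one (hκ : 1 < κ) : critExponent κ R ≤ 1 := by
  unfold critExponent
  split_ifs with h
  · exact le_rfl
  · have hκR := not_le.1 h
    rw [div_le_one (Real.log_pos (hκ.trans hκR))]
    exact Real.log_le_log (by linarith) hκR.le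

theorem rpow_lt_of_lt_critExponent (hκ : 1 < κ) (hR : 0 < R) {p : ℝ} (hp : 0 < p)
    (hpκ : p < critExponent κ R) : R ^ p < κ := by
  unfold critExponent at hpκ
  split_ifs at hpκ with h
  · calc R ^ p ≤ κ ^ p := Real.rpow_le_rpow hR.le h hp.le
      _ < κ ^ (1 : ℝ) := Real.rpow_lt_rpow_of_exponent_lt hκ hpκ
      _ = κ := Real.rpow_one κ
  · have hlogR : 0 < Real.log R := Real.log_pos (hκ.trans (not_le.1 h))
    rw [← Real.log_lt_log_iff (Real.rpow_pos_of_pos hR p) (by linarith), Real.log_rpow hR]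
    exact (lt_div_iff₀ hlogR).1 hpκ

end CritExponent

section SparseCounting

variable {n : ℕ} {x : Fin n → ℝ} {p r : ℝ}

theorem sum_abs_rpow_eq_sum_support (hp : p ≠ 0) :
    ∑ i, |x i| ^ p = ∑ i with x i ≠ 0, |x i| ^ p := by
  refine (Finset.sum_filter_of_ne (p := fun i => x i ≠ 0) fun i _ hi hxi => hi ?_).symm
  rw [hxi, abs_zero, Real.zero_rpow hp]

theorem norm0_mul_rpow_le_sum_abs_rpow (hr : 0 ≤ r) (hp : 0 < p)
    (hx : ∀ i, x i ≠ 0 → r ≤ |x i|) : (norm0 x : ℝ) * r ^ p ≤ ∑ i, |x i| ^ p := by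
  rw [sum_abs_rpow_eq_sum_support hp.ne', norm0, ← nsmul_eq_mul]
  refine Finset.card_nsmul_le_sum _ _ _ fun i hi => ?_
  exact Real.rpow_le_rpow hr (hx i (Finset.mem_filter.1 hi).2) hp.le

theorem sum_abs_rpow_le_norm0_mul_rpow (hp : 0 < p) (hx : ‖x‖ ≤ r) :
    ∑ i, |x i| ^ p ≤ (norm0 x : ℝ) * r ^ p := by
  rw [sum_abs_rpow_eq_sum_support hp.ne', norm0, ← nsmul_eq_mul]
  refine Finset.sum_le_card_nsmul _ _ _ fun i _ => ?_
  exact Real.rpow_le_rpow (abs_nonneg _) ((norm_le_pi_norm x i).trans hx) hp.le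

end SparseCounting

theorem exists_mem_signs_eq_abs_mul {m : ℕ} (v : Fin m → ℝ) :
    ∃ ε ∈ signs m, v = fun j => |v j| * ε j := by
  refine ⟨fun j => if 0 ≤ v j then 1 else -1, fun j => by dsimp only; split_ifs <;> simp,
    funext fun j => ?_⟩
  dsimp only
  split_ifs with h
  · rw [abs_of_nonneg h, mul_one]
  · rw [abs_of_neg (not_le.1 h), neg_mul_neg, mul_one]

/-- Minimizing `∑ |xᵢ|^p` over `Φx = Φx₀` means minimizing the strictly concave `∑ yᵢ^p` over
the `y`-shadow of `T_ε`, so `|x|` is extreme there; and `(x, |x|)` is a vertex of its own fibre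
`{(u, |x|) : |u| ≤ |x|}`. -/
theorem mk_abs_mem_extremePoints_Teps {m n : ℕ} {Φ : Matrix (Fin m) (Fin n) ℝ}
    {b ε : Fin m → ℝ} {r₀ p : ℝ} (hp₀ : 0 < p) (hp₁ : p < 1) {x : Fin n → ℝ}
    (hΦx : Φ *ᵥ x = fun j => b j * ε j) (hx : ‖x‖ ≤ r₀)
    (hmin : ∀ y, Φ *ᵥ y = Φ *ᵥ x → ∑ i, |x i| ^ p ≤ ∑ i, |y i| ^ p) :
    (x, |x|) ∈ (Teps Φ b r₀ ε).extremePoints ℝ := by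
  have hxT : (x, |x|) ∈ Teps Φ b r₀ ε :=
    ⟨hΦx, fun _ => le_rfl, hx, fun i => ⟨abs_nonneg _, (norm_le_pi_norm x i).trans hx⟩⟩
  refine mem_extremePoints_of_map_of_fiber (LinearMap.snd ℝ _ _) ?_ ?_
  · have hconc := strictConcaveOn_sum_apply (ι := Fin n) (Real.strictConcaveOn_rpow hp₀ hp₁)
    refine hconc.mem_extremePoints_of_isMinOn ?_ (mem_image_of_mem _ hxT) (isMinOn_iff.2 ?_)
    · rintro _ ⟨z, hz, rfl⟩ i -
      exact (hz.2.2.2 i).1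
    · rintro _ ⟨z, hz, rfl⟩
      calc ∑ i, |x i| ^ p ≤ ∑ i, |z.1 i| ^ p := hmin z.1 (hz.1.trans hΦx.symm)
        _ ≤ ∑ i, z.2 i ^ p := Finset.sum_le_sum fun i _ =>
          Real.rpow_le_rpow (abs_nonneg _) (hz.2.1 i) hp₀.le
  · have hfiber : Teps Φ b r₀ ε ∩ LinearMap.snd ℝ _ _ ⁻¹' {|x|} ⊆
        (univ.pi fun i => Icc (-|x i|) |x i|) ×ˢ {|x|} := by
      rintro ⟨u, v⟩ ⟨hz, rfl : v = |x|⟩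
      exact ⟨fun i _ => abs_le.1 (hz.2.1 i), rfl⟩
    refine inter_extremePoints_subset_extremePoints_of_subset hfiber ⟨⟨hxT, rfl⟩, ?_⟩
    rw [extremePoints_prod, extremePoints_singleton]
    exact ⟨abs_mem_extremePoints_pi_Icc x, rfl⟩

theorem stmt_19_general {m n : ℕ} (Φ : Matrix (Fin m) (Fin n) ℝ)
    (b : Fin m → ℝ)
    (s : ℕ) (hs1 : 1 ≤ s)
    (hs : IsLeast {k : ℕ | ∃ x : Fin n → ℝ, (∀ j, |Φ.mulVec x j| = b j) ∧ norm0 x = k} s)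
    (r₀ : ℝ) (hr₀ : 0 < r₀)
    (hbound0 : ∀ x : Fin n → ℝ, (∀ j, |Φ.mulVec x j| = b j) →
      (∀ y : Fin n → ℝ, (∀ j, |Φ.mulVec y j| = b j) → norm0 x ≤ norm0 y) → ‖x‖ ≤ r₀)
    (hboundp : ∀ p : ℝ, 0 < p → p < 1 →
      ∀ x : Fin n → ℝ, (∀ j, |Φ.mulVec x j| = b j) →
      (∀ y : Fin n → ℝ, (∀ j, |Φ.mulVec y j| = b j) →
        ∑ i, |x i| ^ p ≤ ∑ i, |y i| ^ p) → ‖x‖ ≤ r₀)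
    (rm : ℝ) (hrm : 0 < rm)
    (hext : ∀ ε ∈ signs m, ∀ q ∈ Set.extremePoints ℝ (Teps Φ b r₀ ε),
      ∀ k : Fin n, q.2 k ≠ 0 → rm ≤ q.2 k)
    (pstar : ℝ)
    (hpstar : pstar = if r₀ / rm ≤ ((s : ℝ) + 1) / (s : ℝ) then 1
      else (Real.log ((s : ℝ) + 1) - Real.log (s : ℝ)) /
        (Real.log r₀ - Real.log rm)) :
    (0 < pstar ∧ pstar ≤ 1) ∧
    ∀ p : ℝ, 0 < p → p < pstar →
      ∀ xp : Fin n → ℝ, (∀ j, |Φ.mulVec xp j| = b j) →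
        (∀ y : Fin n → ℝ, (∀ j, |Φ.mulVec y j| = b j) →
          ∑ i, |xp i| ^ p ≤ ∑ i, |y i| ^ p) →
        ∀ y : Fin n → ℝ, (∀ j, |Φ.mulVec y j| = b j) → norm0 xp ≤ norm0 y := by
  have hs₀ : (0 : ℝ) < s := by exact_mod_cast hs1
  have hκ : 1 < ((s : ℝ) + 1) / s := by rw [one_lt_div hs₀]; linarith
  have hpstar' : pstar = critExponent (((s : ℝ) + 1) / s) (r₀ / rm) := by
    rw [hpstar, critExponent, Real.log_div (by positivity) hs₀.ne',
      Real.log_div hr₀.ne' hrm.ne']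
  subst hpstar'
  refine ⟨⟨critExponent_pos hκ, critExponent_le_one hκ⟩, fun p hp hpp xp hxp hmin y hy => ?_⟩
  have hp₁ : p < 1 := hpp.trans_le (critExponent_le_one hκ)
  obtain ⟨x₀, hx₀, rfl⟩ := hs.1
  have hx₀r₀ : ‖x₀‖ ≤ r₀ := hbound0 x₀ hx₀ fun z hz => hs.2 ⟨z, hz, rfl⟩
  obtain ⟨ε, hε, hΦxp⟩ := exists_mem_signs_eq_abs_mul (Φ *ᵥ xp)
  simp only [hxp] at hΦxp
  have hxp_ext := mk_abs_mem_extremePoints_Teps hp hp₁ hΦxp (hboundp p hp hp₁ xp hxp hmin)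
    fun z hz => hmin z fun j => by rw [hz, hxp]
  have hxp_large : ∀ i, xp i ≠ 0 → rm ≤ |xp i| := fun i hi =>
    hext ε hε _ hxp_ext i (abs_ne_zero.2 hi)
  have hratio : norm0 x₀ * r₀ ^ p < (norm0 x₀ + 1) * rm ^ p := by
    have := rpow_lt_of_lt_critExponent hκ (div_pos hr₀ hrm) hp hpp
    rwa [Real.div_rpow hr₀.le hrm.le, div_lt_div_iff₀ (by positivity) hs₀, mul_comm] at this
  have hcount : (norm0 xp : ℝ) * rm ^ p < (norm0 x₀ + 1) * rm ^ p :=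
    calc (norm0 xp : ℝ) * rm ^ p ≤ ∑ i, |xp i| ^ p :=
          norm0_mul_rpow_le_sum_abs_rpow hrm.le hp hxp_large
      _ ≤ ∑ i, |x₀ i| ^ p := hmin x₀ hx₀
      _ ≤ norm0 x₀ * r₀ ^ p := sum_abs_rpow_le_norm0_mul_rpow hp hx₀r₀
      _ < (norm0 x₀ + 1) * rm ^ p := hratio
  have hcount_nat : norm0 xp < norm0 x₀ + 1 := by
    exact_mod_cast lt_of_mul_lt_mul_right hcount (by positivity)
  exact (Nat.lt_succ_iff.1 hcount_nat).trans (hs.2 ⟨y, hy, rfl⟩)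

/-- let `s ≥ 1` be the minimum of `‖·‖₀` over the nonempty set
`{x | |Φx| = b}`, let `r₀ > 0` bound (in `‖·‖_∞`) all minimizers of `‖·‖₀` and, for
every `p ∈ (0,1)`, all minimizers of `‖·‖_p^p` over this set, and let `0 < r_m ≤ r₀`
be a lower bound on the nonzero coordinates of the `y`-part of the extreme points of
every `T_ε`. Define `p* := 1` if `r₀/r_m ≤ (s+1)/s`, and
`p* := (ln(s+1) − ln s)/(ln r₀ − ln r_m)` otherwise. Then `p* ∈ (0,1]` and for every
`p ∈ (0, p*)`, every minimizer of `‖·‖_p^p` over `{x | |Φx| = b}` is also a minimizer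
of `‖·‖₀` over `{x | |Φx| = b}`. -/
theorem stmt_19 {m n : ℕ} (hmn : m ≤ n) (Φ : Matrix (Fin m) (Fin n) ℝ)
    (hrank : Φ.rank = m) (b : Fin m → ℝ) (hb : ∀ j, 0 ≤ b j)
    (s : ℕ) (hs1 : 1 ≤ s)
    (hs : IsLeast {k : ℕ | ∃ x : Fin n → ℝ, (∀ j, |Φ.mulVec x j| = b j) ∧ norm0 x = k} s)
    (r₀ : ℝ) (hr₀ : 0 < r₀)
    (hbound0 : ∀ x : Fin n → ℝ, (∀ j, |Φ.mulVec x j| = b j) →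
      (∀ y : Fin n → ℝ, (∀ j, |Φ.mulVec y j| = b j) → norm0 x ≤ norm0 y) → ‖x‖ ≤ r₀)
    (hboundp : ∀ p : ℝ, 0 < p → p < 1 →
      ∀ x : Fin n → ℝ, (∀ j, |Φ.mulVec x j| = b j) →
      (∀ y : Fin n → ℝ, (∀ j, |Φ.mulVec y j| = b j) →
        ∑ i, |x i| ^ p ≤ ∑ i, |y i| ^ p) → ‖x‖ ≤ r₀)
    (rm : ℝ) (hrm : 0 < rm) (hrmr₀ : rm ≤ r₀)
    (hext : ∀ ε ∈ signs m, ∀ q ∈ Set.extremePoints ℝ (Teps Φ b r₀ ε),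
      ∀ k : Fin n, q.2 k ≠ 0 → rm ≤ q.2 k)
    (pstar : ℝ)
    (hpstar : pstar = if r₀ / rm ≤ ((s : ℝ) + 1) / (s : ℝ) then 1
      else (Real.log ((s : ℝ) + 1) - Real.log (s : ℝ)) /
        (Real.log r₀ - Real.log rm)) :
    (0 < pstar ∧ pstar ≤ 1) ∧
    ∀ p : ℝ, 0 < p → p < pstar →
      ∀ xp : Fin n → ℝ, (∀ j, |Φ.mulVec xp j| = b j) →
        (∀ y : Fin n → ℝ, (∀ j, |Φ.mulVec y j| = b j) →
          ∑ i, |xp i| ^ p ≤ ∑ i, |y i| ^ p) →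
        ∀ y : Fin n → ℝ, (∀ j, |Φ.mulVec y j| = b j) → norm0 xp ≤ norm0 y :=
  stmt_19_general Φ b s hs1 hs r₀ hr₀ hbound0 hboundp rm hrm hext pstar hpstar
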